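/- Let β be a positive natural number, L > 0, η = L/β, and let G = {zη + η/2 : z ∈ Z, −β ≤ z < β} be a regular grid on [−L, L) with an even number 2β of points. Let u : R → R be a step function supported on the grid cells (vanishing outside [−L, L)). Then the discrete L² Poincaré inequality holds: η Σ_{a∈G} |u(a)|² ≤ 4L² · η Σ_{a∈G} |D^η u(a)|², where D^η u(x) = (u(x+η) − u(x−η))/(2η), i.e., ‖u‖_{L²} ≤ 2L ‖D^η u‖_{L²}. -/

import Mathlib

/-!
The centered difference at `z` only links the values at `z - 1` and `z + 1`, so the grid splits
by parity into two chains of `β` points, each stepping by one difference. Since `u` vanishes just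
outside `[-L, L)`, one chain is zero one step past its right end and the other one step before
its left end. Telescoping from that zero and Cauchy–Schwarz bound each value squared by `β` times
the chain's sum of squared differences, so each chain obeys a Poincaré inequality with constant
`β²`; the two chains use complementary halves of the differences, and `β η = L`.
-/

open Finset

theorem Int.sum_Ico_add_two_mul {M : Type*} [AddCommMonoid M] (g : ℤ → M) (a : ℤ) (n : ℕ) :
    ∑ z ∈ Ico a (a + 2 * n), g z = ∑ j ∈ Finset.range n, (g (a + 2 * j) + g (a + 2 * j + 1)) := by
  induction n with
  | zero => simp
  | succ n ih =>
    have hend : a + 2 * ((n + 1 : ℕ) : ℤ) = a + 2 * n + 1 + 1 := by push_cast; ring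
    rw [hend, ← sum_Ico_add_eq_sum_Ico_add_one (by omega),
      ← sum_Ico_add_eq_sum_Ico_add_one (by omega), ih, sum_range_succ, add_assoc]

section ChainPoincare

variable {R : Type*} [CommRing R] [LinearOrder R] [IsStrictOrderedRing R]

theorem sq_sum_le_mul_sum_sq_of_subset {ι : Type*} {s t : Finset ι} {n : ℕ} (hst : s ⊆ t)
    (hs : #s ≤ n) (f : ι → R) : (∑ i ∈ s, f i) ^ 2 ≤ n * ∑ i ∈ t, f i ^ 2 :=
  calc (∑ i ∈ s, f i) ^ 2 ≤ #s * ∑ i ∈ s, f i ^ 2 := sq_sum_le_card_mul_sum_sq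
    _ ≤ n * ∑ i ∈ t, f i ^ 2 := by gcongr

theorem sum_range_sq_le_of_eq_zero {n : ℕ} {c : ℕ → R} (hc : c n = 0) :
    ∑ j ∈ range n, c j ^ 2 ≤ (n : R) ^ 2 * ∑ j ∈ range n, (c (j + 1) - c j) ^ 2 := by
  have hpoint (j : ℕ) (hj : j ∈ range n) :
      c j ^ 2 ≤ n * ∑ k ∈ range n, (c (k + 1) - c k) ^ 2 := by
    have hjn : j ≤ n := (mem_range.1 hj).le
    calc c j ^ 2 = (∑ k ∈ Ico j n, (c (k + 1) - c k)) ^ 2 := by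
          rw [sum_Ico_sub c hjn, hc, zero_sub, neg_sq]
      _ ≤ _ := sq_sum_le_mul_sum_sq_of_subset (fun k hk => mem_range.2 (mem_Ico.1 hk).2)
          (by simp) _
  calc ∑ j ∈ range n, c j ^ 2 ≤ ∑ _j ∈ range n, n * ∑ k ∈ range n, (c (k + 1) - c k) ^ 2 :=
        sum_le_sum hpoint
    _ = _ := by rw [sum_const, card_range, nsmul_eq_mul]; ring

theorem sum_range_sq_succ_le_of_eq_zero {n : ℕ} {c : ℕ → R} (hc : c 0 = 0) :
    ∑ j ∈ range n, c (j + 1) ^ 2 ≤ (n : R) ^ 2 * ∑ j ∈ range n, (c (j + 1) - c j) ^ 2 := by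
  have hpoint (j : ℕ) (hj : j ∈ range n) :
      c (j + 1) ^ 2 ≤ n * ∑ k ∈ range n, (c (k + 1) - c k) ^ 2 := by
    calc c (j + 1) ^ 2 = (∑ k ∈ range (j + 1), (c (k + 1) - c k)) ^ 2 := by
          rw [sum_range_sub c, hc, sub_zero]
      _ ≤ _ := sq_sum_le_mul_sum_sq_of_subset (range_subset_range.2 (mem_range.1 hj))
          (by simpa using mem_range.1 hj) _
  calc ∑ j ∈ range n, c (j + 1) ^ 2
        ≤ ∑ _j ∈ range n, n * ∑ k ∈ range n, (c (k + 1) - c k) ^ 2 := sum_le_sum hpoint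
    _ = _ := by rw [sum_const, card_range, nsmul_eq_mul]; ring

theorem sum_Ico_sq_le_sq_mul_sum_sq_centered_diff {n : ℕ} {V : ℤ → R} (hleft : V (-n - 1) = 0)
    (hright : V n = 0) :
    ∑ z ∈ Ico (-(n : ℤ)) n, V z ^ 2
      ≤ (n : R) ^ 2 * ∑ z ∈ Ico (-(n : ℤ)) n, (V (z + 1) - V (z - 1)) ^ 2 := by
  set even : ℕ → R := fun j => V (-n + 2 * j)
  set odd : ℕ → R := fun j => V (-n - 1 + 2 * j)
  have hIco : Ico (-(n : ℤ)) n = Ico (-(n : ℤ)) (-n + 2 * n) := by ring_nf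
  have hsplit : ∀ g : ℤ → R, ∑ z ∈ Ico (-(n : ℤ)) n, g z
      = ∑ j ∈ range n, g (-n + 2 * j) + ∑ j ∈ range n, g (-n + 2 * j + 1) := fun g => by
    rw [hIco, Int.sum_Ico_add_two_mul, sum_add_distrib]
  have heven := sum_range_sq_le_of_eq_zero (c := even) (n := n)
    (by simpa [even, two_mul] using hright)
  have hodd := sum_range_sq_succ_le_of_eq_zero (c := odd) (n := n) (by simpa [odd] using hleft)
  calc ∑ z ∈ Ico (-(n : ℤ)) n, V z ^ 2
      = ∑ j ∈ range n, even j ^ 2 + ∑ j ∈ range n, odd (j + 1) ^ 2 := by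
        rw [hsplit]; push_cast [even, odd]; ring_nf
    _ ≤ (n : R) ^ 2 * ∑ j ∈ range n, (even (j + 1) - even j) ^ 2
        + (n : R) ^ 2 * ∑ j ∈ range n, (odd (j + 1) - odd j) ^ 2 := add_le_add heven hodd
    _ = _ := by rw [hsplit, ← mul_add, add_comm]; push_cast [even, odd]; ring_nf

end ChainPoincare

/-- Discrete L² Poincaré inequality on the regular one-dimensional grid
G = {zη + η/2 : −β ≤ z < β} of [−L,L) with mesh η = L/β:
‖u‖_{L²} ≤ 2L ‖D^η u‖_{L²} for step/grid functions vanishing off the grid. -/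
theorem discrete_poincare_inequality_1d
    (β : ℕ) (hβ : 0 < β) (L η : ℝ) (hL : 0 < L) (hη : η = L / β)
    (u : ℝ → ℝ)
    (hsupp : ∀ x : ℝ,
      (∀ z : ℤ, -(β : ℤ) ≤ z → z < β → x ≠ z * η + η / 2) → u x = 0) :
    η * ∑ z ∈ Finset.Ico (-(β : ℤ)) (β : ℤ), (u ((z : ℝ) * η + η / 2)) ^ 2
      ≤ 4 * L ^ 2 *
        (η * ∑ z ∈ Finset.Ico (-(β : ℤ)) (β : ℤ),
          ((u ((z : ℝ) * η + η / 2 + η) - u ((z : ℝ) * η + η / 2 - η)) / (2 * η)) ^ 2) := by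
  have hη0 : 0 < η := by rw [hη]; positivity
  set V : ℤ → ℝ := fun z => u (z * η + η / 2)
  have hV_off (z : ℤ) (hz : z < -β ∨ β ≤ z) : V z = 0 := by
    refine hsupp _ fun z' hz'₁ hz'₂ heq => ?_
    have : z = z' := by exact_mod_cast mul_right_cancel₀ hη0.ne' (add_right_cancel heq)
    omega
  have hdiff (z : ℤ) : u (z * η + η / 2 + η) - u (z * η + η / 2 - η) = V (z + 1) - V (z - 1) := by
    simp only [V]; push_cast; ring_nf
  simp_rw [hdiff, div_pow, ← sum_div]
  have key := sum_Ico_sq_le_sq_mul_sum_sq_centered_diff (hV_off (-β - 1) (by omega))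
    (hV_off β (by omega))
  calc η * ∑ z ∈ Ico (-(β : ℤ)) β, V z ^ 2
      ≤ η * ((β : ℝ) ^ 2 * ∑ z ∈ Ico (-(β : ℤ)) β, (V (z + 1) - V (z - 1)) ^ 2) := by gcongr
    _ = _ := by rw [hη]; field_simp; ring
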